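/- arXiv:0906.1466 — 5 statements merged into one kernel-verified Lean document; each statement's English description precedes it below -/
import Mathlib

section
/- The point P = (1, 4) on the elliptic curve E has infinite order in E(ℚ); that is, for every positive integer n, n·P ≠ O. (Consequently the cuspidal divisor P − O is not torsion in the Picard group of E.) -/
/-- The elliptic curve `E : y² = x³ + 5x + 10` (curve 400H1 in Cremona's tables),
given as a Weierstrass curve over `ℚ` with `a₁ = a₂ = a₃ = 0`, `a₄ = 5`, `a₆ = 10`. -/
def E : WeierstrassCurve.Affine ℚ := { a₁ := 0, a₂ := 0, a₃ := 0, a₄ := 5, a₆ := 10 }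

lemma hP : E.Nonsingular 1 4 := by
  simp [E, WeierstrassCurve.Affine.nonsingular_iff, WeierstrassCurve.Affine.equation_iff]
  norm_num

/-- The rational point `P = (1, 4)` on `E`. -/
noncomputable def P : E.Point := .some _ _ hP

/-! On a short Weierstrass curve over `ℚ` with `2`-integral `a₄, a₆`, a point `(x, y)` with
`|x|₂ > 1` has `|y|₂² = |x|₂³`, so the doubling slope `(3x² + a₄) / (2y)` has `|·|₂² = 4 |x|₂`
and doubling multiplies `|x|₂` by `4`. The points `2ᵏ • Q` are then pairwise distinct, so `Q`
has infinite order. For `Q = 8P = (481/1024, 115631/32768)` we have `|x|₂ = 2¹⁰`. -/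

open WeierstrassCurve.Affine WeierstrassCurve.Affine.Point

lemma padicNorm_add_eq_left {p : ℕ} [Fact p.Prime] {q r : ℚ} (h : padicNorm p r < padicNorm p q) :
    padicNorm p (q + r) = padicNorm p q := by
  rw [padicNorm.add_eq_max_of_ne h.ne', max_eq_left h.le]

lemma padicNorm_two_two : padicNorm 2 (2 : ℚ) = 1 / 2 := by
  simpa using padicNorm.padicNorm_p_of_prime (p := 2)

lemma padicNorm_two_three : padicNorm 2 (3 : ℚ) = 1 := by
  simpa using (padicNorm.nat_eq_one_iff (p := 2) 3).2 (by decide)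

namespace WeierstrassCurve.Affine

section Field

variable {F : Type*} [Field F] {W : WeierstrassCurve.Affine F} [W.IsShortNF]

lemma negY_of_isShortNF (x y : F) : W.negY x y = -y := by
  simp only [negY, a₁_of_isShortNF, a₃_of_isShortNF]
  ring

lemma addX_self_of_isShortNF (x ℓ : F) : W.addX x x ℓ = ℓ ^ 2 - 2 * x := by
  simp only [addX, a₁_of_isShortNF, a₂_of_isShortNF]
  ring

lemma Y_ne_negY_of_isShortNF {x y : F} (hy : 2 * y ≠ 0) : y ≠ W.negY x y := by
  rw [negY_of_isShortNF]
  contrapose! hy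
  linear_combination hy

variable [DecidableEq F]

lemma slope_self_of_isShortNF {x y : F} (hy : 2 * y ≠ 0) :
    W.slope x x y y = (3 * x ^ 2 + W.a₄) / (2 * y) := by
  rw [slope_of_Y_ne rfl (Y_ne_negY_of_isShortNF hy),
    negY_of_isShortNF, a₁_of_isShortNF, a₂_of_isShortNF]
  ring_nf

lemma Point.two_nsmul_some_of_isShortNF {x y x' y' : F} {h : W.Nonsingular x y}
    (h' : W.Nonsingular x' y') (hy : 2 * y ≠ 0)
    (hx' : x' = ((3 * x ^ 2 + W.a₄) / (2 * y)) ^ 2 - 2 * x)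
    (hy' : y' = (3 * x ^ 2 + W.a₄) / (2 * y) * (x - x') - y) :
    2 • some x y h = some x' y' h' := by
  rw [two_nsmul, add_self_of_Y_ne (Y_ne_negY_of_isShortNF hy),
    some.injEq, addX_self_of_isShortNF, slope_self_of_isShortNF hy]
  refine ⟨hx'.symm, ?_⟩
  simp only [addY, negAddY, negY_of_isShortNF, addX_self_of_isShortNF, hy', hx']
  ring

end Field

variable {W : WeierstrassCurve.Affine ℚ} [W.IsShortNF]

lemma padicNorm_two_Y_sq {x y : ℚ} (h : W.Equation x y) (ha₄ : padicNorm 2 W.a₄ ≤ 1)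
    (ha₆ : padicNorm 2 W.a₆ ≤ 1) (hx : 1 < padicNorm 2 x) :
    padicNorm 2 y ^ 2 = padicNorm 2 x ^ 3 := by
  have hxy : y ^ 2 = x ^ 3 + W.a₄ * x + W.a₆ := by
    simpa [equation_iff, a₁_of_isShortNF, a₃_of_isShortNF] using h
  set r := padicNorm 2 x
  have hx₃ : padicNorm 2 (x ^ 3) = r ^ 3 := IsAbsoluteValue.abv_pow _ x 3
  have hr : r < r ^ 3 := lt_self_pow₀ hx (by norm_num)
  have hsum : padicNorm 2 (x ^ 3 + W.a₄ * x) = r ^ 3 := by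
    rw [padicNorm_add_eq_left (by rw [padicNorm.mul, hx₃]; nlinarith [padicNorm.nonneg (p := 2) x]),
      hx₃]
  rw [← IsAbsoluteValue.abv_pow (padicNorm 2), hxy, padicNorm_add_eq_left (by linarith), hsum]

lemma Y_ne_zero_of_one_lt_padicNorm_two {x y : ℚ} (h : W.Equation x y)
    (ha₄ : padicNorm 2 W.a₄ ≤ 1) (ha₆ : padicNorm 2 W.a₆ ≤ 1) (hx : 1 < padicNorm 2 x) : y ≠ 0 := by
  rintro rfl
  have hy := padicNorm_two_Y_sq h ha₄ ha₆ hx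
  rw [padicNorm.zero] at hy
  linarith [one_lt_pow₀ hx (by norm_num : 3 ≠ 0)]

lemma padicNorm_two_addX_self {x y : ℚ} (h : W.Equation x y) (ha₄ : padicNorm 2 W.a₄ ≤ 1)
    (ha₆ : padicNorm 2 W.a₆ ≤ 1) (hx : 1 < padicNorm 2 x) :
    padicNorm 2 (W.addX x x (W.slope x x y y)) = 4 * padicNorm 2 x := by
  have hy₀ := Y_ne_zero_of_one_lt_padicNorm_two h ha₄ ha₆ hx
  have hy := padicNorm_two_Y_sq h ha₄ ha₆ hx
  rw [addX_self_of_isShortNF, slope_self_of_isShortNF (mul_ne_zero two_ne_zero hy₀)]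
  set r := padicNorm 2 x
  have h3x₂ : padicNorm 2 (3 * x ^ 2) = r ^ 2 := by
    rw [padicNorm.mul, padicNorm_two_three, one_mul, IsAbsoluteValue.abv_pow (padicNorm 2)]
  have hnum : padicNorm 2 (3 * x ^ 2 + W.a₄) = r ^ 2 := by
    rw [padicNorm_add_eq_left (by linarith [one_lt_pow₀ hx two_ne_zero]), h3x₂]
  have hslope : padicNorm 2 (((3 * x ^ 2 + W.a₄) / (2 * y)) ^ 2) = 4 * r := by
    rw [IsAbsoluteValue.abv_pow (padicNorm 2), padicNorm.div, padicNorm.mul, padicNorm_two_two,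
      div_pow, mul_pow, hy, hnum]
    field_simp
    ring
  have h2x : padicNorm 2 (-(2 * x)) = r / 2 := by
    rw [padicNorm.neg, padicNorm.mul, padicNorm_two_two]
    ring
  rw [sub_eq_add_neg, padicNorm_add_eq_left (by linarith), hslope]

namespace Point

/-- The point at infinity gets the junk value `0`. -/
def padicNormX (p : ℕ) : W.Point → ℚ
  | zero => 0
  | some x _ _ => padicNorm p x

lemma padicNormX_two_nsmul (ha₄ : padicNorm 2 W.a₄ ≤ 1) (ha₆ : padicNorm 2 W.a₆ ≤ 1)
    {Q : W.Point} (hQ : 1 < padicNormX 2 Q) : padicNormX 2 (2 • Q) = 4 * padicNormX 2 Q := by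
  cases Q with
  | zero => exact absurd hQ (by simp [padicNormX])
  | some x y h =>
    have hy := mul_ne_zero two_ne_zero (Y_ne_zero_of_one_lt_padicNorm_two h.1 ha₄ ha₆ hQ)
    rw [two_nsmul, add_self_of_Y_ne (Y_ne_negY_of_isShortNF hy)]
    exact padicNorm_two_addX_self h.1 ha₄ ha₆ hQ

lemma padicNormX_two_pow_nsmul (ha₄ : padicNorm 2 W.a₄ ≤ 1) (ha₆ : padicNorm 2 W.a₆ ≤ 1)
    {Q : W.Point} (hQ : 1 < padicNormX 2 Q) (k : ℕ) :
    padicNormX 2 (2 ^ k • Q) = 4 ^ k * padicNormX 2 Q := by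
  induction k with
  | zero => simp
  | succ k ih =>
    rw [pow_succ, mul_nsmul, padicNormX_two_nsmul ha₄ ha₆ ?_, ih]
    · ring
    · rw [ih]
      nlinarith [one_le_pow₀ (by norm_num : (1 : ℚ) ≤ 4) (n := k)]

lemma not_isOfFinAddOrder_of_one_lt_padicNormX (ha₄ : padicNorm 2 W.a₄ ≤ 1)
    (ha₆ : padicNorm 2 W.a₆ ≤ 1) {Q : W.Point} (hQ : 1 < padicNormX 2 Q) :
    ¬IsOfFinAddOrder Q := by
  intro hQfin
  refine hQfin.finite_multiples.not_infinite
    (Set.infinite_of_injective_forall_mem (f := fun k : ℕ ↦ 2 ^ k • Q) ?_ fun k ↦ ⟨2 ^ k, rfl⟩)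
  intro k j hkj
  have := congrArg (padicNormX 2) hkj
  simp only [padicNormX_two_pow_nsmul ha₄ ha₆ hQ] at this
  exact pow_right_injective₀ (by norm_num) (by norm_num)
    (mul_right_cancel₀ (zero_lt_one.trans hQ).ne' this)

end Point

end WeierstrassCurve.Affine

instance : E.IsShortNF := ⟨rfl, rfl, rfl⟩

lemma E_nonsingular_of_eq {x y : ℚ} (h : y ^ 2 = x ^ 3 + 5 * x + 10) : E.Nonsingular x y := by
  refine (equation_iff_nonsingular_of_Δ_ne_zero ?_).1 ?_
  · rw [WeierstrassCurve.Δ_of_isShortNF]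
    norm_num [E]
  · rw [equation_iff]
    norm_num [E, h]

lemma eight_nsmul_P :
    8 • P = .some (481 / 1024) (115631 / 32768) (E_nonsingular_of_eq (by norm_num)) := by
  rw [show 8 = 2 * 2 * 2 from rfl, mul_nsmul', mul_nsmul', P,
    two_nsmul_some_of_isShortNF (x' := -1) (y' := -2) (E_nonsingular_of_eq (by norm_num)),
    two_nsmul_some_of_isShortNF (x' := 6) (y' := 16) (E_nonsingular_of_eq (by norm_num)),
    two_nsmul_some_of_isShortNF] <;> norm_num [E]

lemma padicNormX_eight_nsmul_P : Point.padicNormX 2 (8 • P) = 1024 := by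
  rw [eight_nsmul_P, Point.padicNormX, padicNorm.div, show (1024 : ℚ) = 2 ^ 10 by norm_num,
    IsAbsoluteValue.abv_pow (padicNorm 2), padicNorm_two_two]
  have h481 : padicNorm 2 (481 : ℚ) = 1 := by
    exact_mod_cast (padicNorm.nat_eq_one_iff (p := 2) 481).2 (by decide)
  rw [h481]
  norm_num

/-- The point `P = (1, 4)` has infinite order in `E(ℚ)`: `n • P ≠ O` for every
positive integer `n`. -/
theorem P_infinite_order : ∀ n : ℕ, 0 < n → n • P ≠ 0 := by
  intro n hn hnP
  refine Point.not_isOfFinAddOrder_of_one_lt_padicNormX (Q := 8 • P) ?_ ?_ ?_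
    (isOfFinAddOrder_iff_nsmul_eq_zero.2 ⟨n, hn, hnP⟩).nsmul
  · exact_mod_cast padicNorm.of_nat (p := 2) 5
  · exact_mod_cast padicNorm.of_nat (p := 2) 10
  · rw [padicNormX_eight_nsmul_P]
    norm_num
end

section
/- On the elliptic curve E, with P = (1,4), the ramification points of the Belyi map are the following multiples of P: −P = (1, −4), 4·P = (6, 16), and (−4)·P = (6, −16) in the group E(ℚ). -/
lemma hP' : E.Nonsingular 1 (-4) := by
  simp [E, WeierstrassCurve.Affine.nonsingular_iff, WeierstrassCurve.Affine.equation_iff]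
  norm_num

lemma hQ : E.Nonsingular 6 16 := by
  simp [E, WeierstrassCurve.Affine.nonsingular_iff, WeierstrassCurve.Affine.equation_iff]
  norm_num

lemma hQ' : E.Nonsingular 6 (-16) := by
  simp [E, WeierstrassCurve.Affine.nonsingular_iff, WeierstrassCurve.Affine.equation_iff]
  norm_num

namespace WeierstrassCurve.Affine.Point

lemma neg_some_of_a₁_a₃_eq_zero {R : Type*} [CommRing R] {W : WeierstrassCurve.Affine R}
    (ha₁ : W.a₁ = 0) (ha₃ : W.a₃ = 0) {x y : R} (h : W.Nonsingular x y)
    (h' : W.Nonsingular x (-y)) : -some x y h = some x (-y) h' := by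
  simp [neg_some, negY, ha₁, ha₃]

lemma some_add_self_of_slope {F : Type*} [Field F] [DecidableEq F]
    {W : WeierstrassCurve.Affine F} {x y x' y' ℓ : F} (h : W.Nonsingular x y)
    (h' : W.Nonsingular x' y') (hy : y ≠ W.negY x y)
    (hℓ : ℓ * (y - W.negY x y) = 3 * x ^ 2 + 2 * W.a₂ * x + W.a₄ - W.a₁ * y)
    (hx' : W.addX x x ℓ = x') (hy' : W.addY x x y ℓ = y') :
    some x y h + some x y h = some x' y' h' := by
  have hslope : W.slope x x y y = ℓ := by
    rw [slope_of_Y_ne rfl hy, div_eq_iff (sub_ne_zero.mpr hy), hℓ]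
  rw [add_self_of_Y_ne hy, some.injEq, hslope]
  exact ⟨hx', hy'⟩

end WeierstrassCurve.Affine.Point

open WeierstrassCurve.Affine

lemma E_nonsingular_neg_one_neg_two : E.Nonsingular (-1) (-2) := by
  simp [E, nonsingular_iff, equation_iff]
  norm_num

lemma P_add_P : P + P = .some _ _ E_nonsingular_neg_one_neg_two :=
  Point.some_add_self_of_slope (ℓ := 1) _ _ (by norm_num [E]) (by norm_num [E]) (by norm_num [E])
    (by norm_num [E, addY])

lemma four_zsmul_P : (4 : ℤ) • P = .some _ _ hQ := by
  have hdouble : Point.some _ _ E_nonsingular_neg_one_neg_two +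
      .some _ _ E_nonsingular_neg_one_neg_two = .some _ _ hQ :=
    Point.some_add_self_of_slope (ℓ := -2) _ _ (by norm_num [E]) (by norm_num [E])
      (by norm_num [E]) (by norm_num [E, addY])
  rw [show (4 : ℤ) • P = (P + P) + (P + P) by abel, P_add_P, hdouble]

/-- On `E`, the ramification points of the Belyi map are the following multiples of
`P = (1, 4)`: `−P = (1, −4)`, `4 • P = (6, 16)` and `(−4) • P = (6, −16)` in `E(ℚ)`. -/
theorem cusps_are_multiples_of_P :
    -P = .some _ _ hP' ∧ (4 : ℤ) • P = .some _ _ hQ ∧ (-4 : ℤ) • P = .some _ _ hQ' := by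
  refine ⟨Point.neg_some_of_a₁_a₃_eq_zero rfl rfl hP hP', four_zsmul_P, ?_⟩
  rw [neg_smul, four_zsmul_P]
  exact Point.neg_some_of_a₁_a₃_eq_zero rfl rfl hQ hQ'
end

section
/- For every complex number t with t ≠ 16 and t ≠ −16, the set {(x, y) ∈ ℂ × ℂ : y² = x³ + 5x + 10 and y·(x − 5) = t} has exactly 5 elements. (This expresses that the degree-5 map (x,y) ↦ y(x−5) on the complex points of E is unramified away from the critical values ±16 and ∞.) -/
/-!
Over `t ≠ 0` the fibre of `(x, y) ↦ y (x - 5)` meets `x = 5` nowhere, so it is the graph of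
`x ↦ t / (x - 5)` over the roots of the quintic `(x - 5)² (x³ + 5x + 10) - t²`. Its derivative is
`5 (x - 5)(x - 1)³` and the quintic takes the values `-t²` and `256 - t²` at `5` and `1`, so it is
separable exactly when `t ≠ 0, ±16`. Over `t = 0` the fibre is the three points with `y = 0`
together with `(5, ±√160)`.
-/

open Polynomial

namespace Polynomial

variable {K : Type*} [Field K]

theorem ncard_setOf_isRoot_of_separable [IsAlgClosed K] {p : K[X]} (hp : p.Separable) :
    {x | p.IsRoot x}.ncard = p.natDegree := by
  classical
  have hroots : {x | p.IsRoot x} = ↑p.roots.toFinset := by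
    ext x
    simp [mem_roots hp.ne_zero]
  rw [hroots, Set.ncard_coe_finset, Multiset.toFinset_card_of_nodup (nodup_roots hp),
    ← (IsAlgClosed.splits p).natDegree_eq_card_roots]

theorem isCoprime_X_sub_C_of_not_isRoot {p : K[X]} {a : K} (h : ¬p.IsRoot a) :
    IsCoprime (X - C a) p :=
  (irreducible_X_sub_C a).coprime_iff_not_dvd.mpr (mt dvd_iff_isRoot.mp h)

theorem separable_X_pow_three_add_C_mul_X_add_C {a b : K} (h : 4 * a ^ 3 + 27 * b ^ 2 ≠ 0) :
    (X ^ 3 + C a * X + C b).Separable := by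
  -- the Bézout identity expressing the resultant of the cubic and its derivative
  have bezout : (27 * C b - 18 * C a * X) * (X ^ 3 + C a * X + C b) +
      (6 * C a * X ^ 2 - 9 * C b * X + 4 * C a ^ 2) * derivative (X ^ 3 + C a * X + C b) =
      C (4 * a ^ 3 + 27 * b ^ 2) := by
    simp only [derivative_X_pow, derivative_C_mul_X, derivative_C, map_add, map_mul, map_pow,
      map_ofNat, Nat.cast_ofNat]
    ring
  have hD : C (4 * a ^ 3 + 27 * b ^ 2)⁻¹ * C (4 * a ^ 3 + 27 * b ^ 2) = 1 := by
    rw [← C_mul, inv_mul_cancel₀ h, C_1]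
  exact ⟨C (4 * a ^ 3 + 27 * b ^ 2)⁻¹ * (27 * C b - 18 * C a * X),
    C (4 * a ^ 3 + 27 * b ^ 2)⁻¹ * (6 * C a * X ^ 2 - 9 * C b * X + 4 * C a ^ 2),
    by linear_combination C (4 * a ^ 3 + 27 * b ^ 2)⁻¹ * bezout + hD⟩

end Polynomial

section CurveFibre

variable {K : Type*} [Field K]

def curveFibre (f : K[X]) (c t : K) : Set (K × K) :=
  {p | p.2 ^ 2 = f.eval p.1 ∧ p.2 * (p.1 - c) = t}

noncomputable def fibrePolynomial (f : K[X]) (c t : K) : K[X] :=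
  (X - C c) ^ 2 * f - C (t ^ 2)

theorem curveFibre_eq_image_of_ne_zero {f : K[X]} {c t : K} (ht : t ≠ 0) :
    curveFibre f c t =
      (fun x ↦ (x, t / (x - c))) '' {x | (fibrePolynomial f c t).IsRoot x} := by
  ext ⟨x, y⟩
  simp only [curveFibre, fibrePolynomial, Set.mem_ofPred_eq, Set.mem_image, Prod.mk.injEq, IsRoot,
    eval_sub, eval_mul, eval_pow, eval_X, eval_C]
  constructor
  · rintro ⟨hcurve, hfibre⟩
    have hx : x - c ≠ 0 := fun h ↦ ht (by rw [← hfibre, h, mul_zero])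
    refine ⟨x, ?_, rfl, by rw [← hfibre, mul_div_cancel_right₀ y hx]⟩
    linear_combination (x - c) ^ 2 * hcurve.symm + (y * (x - c) + t) * hfibre
  · rintro ⟨x, hroot, rfl, rfl⟩
    have hx : x - c ≠ 0 := fun h ↦ ht (by simpa [h] using hroot)
    constructor
    · field_simp
      linear_combination -hroot
    · field_simp

theorem curveFibre_zero (f : K[X]) (c : K) :
    curveFibre f c 0 =
      (fun x ↦ (x, 0)) '' {x | f.IsRoot x} ∪
        (fun y ↦ (c, y)) '' {y | (X ^ 2 - C (f.eval c)).IsRoot y} := by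
  ext ⟨x, y⟩
  simp only [curveFibre, Set.mem_ofPred_eq, Set.mem_union, Set.mem_image, Prod.mk.injEq, IsRoot,
    eval_sub, eval_pow, eval_X, eval_C, mul_eq_zero, sub_eq_zero]
  constructor
  · rintro ⟨hcurve, rfl | rfl⟩
    · exact .inl ⟨x, by simpa using hcurve.symm, rfl, rfl⟩
    · exact .inr ⟨y, hcurve, rfl, rfl⟩
  · rintro (⟨x, hroot, rfl, rfl⟩ | ⟨y, hroot, rfl, rfl⟩)
    · simpa using hroot.symm
    · exact ⟨hroot, .inr rfl⟩

variable [IsAlgClosed K]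

theorem ncard_curveFibre_of_ne_zero {f : K[X]} {c t : K} (ht : t ≠ 0)
    (hsep : (fibrePolynomial f c t).Separable) :
    (curveFibre f c t).ncard = (fibrePolynomial f c t).natDegree := by
  rw [curveFibre_eq_image_of_ne_zero ht,
    Set.ncard_image_of_injective _ fun x y hxy ↦ (Prod.ext_iff.mp hxy).1,
    ncard_setOf_isRoot_of_separable hsep]

theorem ncard_curveFibre_zero {f : K[X]} {c : K} (hf : f.Separable) (hc : f.eval c ≠ 0)
    (h2 : (2 : K) ≠ 0) : (curveFibre f c 0).ncard = f.natDegree + 2 := by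
  have hsep : (X ^ 2 - C (f.eval c)).Separable :=
    separable_X_pow_sub_C _ (by exact_mod_cast h2) hc
  have hdisj : Disjoint ((fun x ↦ (x, 0)) '' {x | f.IsRoot x})
      ((fun y ↦ (c, y)) '' {y | (X ^ 2 - C (f.eval c)).IsRoot y}) := by
    rw [Set.disjoint_left]
    rintro _ ⟨x, hx, rfl⟩ ⟨y, -, hxy⟩
    rw [Prod.mk.injEq] at hxy
    exact hc (hxy.1 ▸ hx)
  rw [curveFibre_zero, Set.ncard_union_eq hdisj ((finite_setOfPred_isRoot hf.ne_zero).image _)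
      ((finite_setOfPred_isRoot hsep.ne_zero).image _),
    Set.ncard_image_of_injective _ fun x y hxy ↦ (Prod.ext_iff.mp hxy).1,
    Set.ncard_image_of_injective _ fun x y hxy ↦ (Prod.ext_iff.mp hxy).2,
    ncard_setOf_isRoot_of_separable hf, ncard_setOf_isRoot_of_separable hsep,
    natDegree_X_pow_sub_C]

end CurveFibre

theorem separable_fibrePolynomial_five {K : Type*} [Field K] (h5 : (5 : K) ≠ 0) {t : K}
    (ht : t ≠ 0) (h16 : t ≠ 16) (h16' : t ≠ -16) :
    (fibrePolynomial (X ^ 3 + C 5 * X + C 10) 5 t).Separable := by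
  have hderiv : derivative (fibrePolynomial (X ^ 3 + C 5 * X + C 10) 5 t) =
      C 5 * ((X - C 5) * (X - C 1) ^ 3) := by
    simp only [fibrePolynomial, derivative_sub, derivative_mul, derivative_add, derivative_pow,
      derivative_X, derivative_C, derivative_ofNat, map_ofNat, map_one, Nat.cast_ofNat]
    ring
  have hroot5 : ¬(fibrePolynomial (X ^ 3 + C 5 * X + C 10) 5 t).IsRoot 5 := by
    simpa [fibrePolynomial] using ht
  have hroot1 : ¬(fibrePolynomial (X ^ 3 + C 5 * X + C 10) 5 t).IsRoot 1 := by
    simp only [fibrePolynomial, IsRoot, eval_sub, eval_mul, eval_add, eval_pow, eval_X, eval_C]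
    intro hroot
    have hfactor : (16 - t) * (16 + t) = 0 := by linear_combination hroot
    rcases mul_eq_zero.mp hfactor with hsub | hadd
    · exact h16 (by linear_combination -hsub)
    · exact h16' (by linear_combination hadd)
  rw [Separable, hderiv, isCoprime_mul_unit_left_right (isUnit_C.mpr h5.isUnit)]
  exact (isCoprime_X_sub_C_of_not_isRoot hroot5).symm.mul_right
    (isCoprime_X_sub_C_of_not_isRoot hroot1).symm.pow_right

/-- For every complex number `t ≠ ±16`, the fibre of the degree-5 map
`(x, y) ↦ y·(x − 5)` on the complex points of `E : y² = x³ + 5x + 10` over `t`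
has exactly 5 elements; i.e. the map is unramified away from its critical values
`±16` and `∞`. -/
theorem fibre_card_eq_five (t : ℂ) (h16 : t ≠ 16) (h16' : t ≠ -16) :
    {p : ℂ × ℂ | p.2 ^ 2 = p.1 ^ 3 + 5 * p.1 + 10 ∧ p.2 * (p.1 - 5) = t}.ncard = 5 := by
  have hfibre : {p : ℂ × ℂ | p.2 ^ 2 = p.1 ^ 3 + 5 * p.1 + 10 ∧ p.2 * (p.1 - 5) = t} =
      curveFibre (X ^ 3 + C 5 * X + C 10) 5 t := by
    ext p
    simp [curveFibre]
  rw [hfibre]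
  rcases eq_or_ne t 0 with rfl | ht
  · have hdeg : (X ^ 3 + C 5 * X + C 10 : ℂ[X]).natDegree = 3 := by compute_degree!
    rw [ncard_curveFibre_zero (separable_X_pow_three_add_C_mul_X_add_C (by norm_num))
      (by norm_num) two_ne_zero, hdeg]
  · rw [ncard_curveFibre_of_ne_zero ht
      (separable_fibrePolynomial_five (by norm_num) ht h16 h16'), fibrePolynomial]
    compute_degree!
end

section
/- The fibres of the map (x,y) ↦ y(x−5) over its finite critical values ±16 are: {(x, y) ∈ ℂ × ℂ : y² = x³ + 5x + 10 and y·(x − 5) = −16} = {(1, 4), (6, −16)}, and {(x, y) ∈ ℂ × ℂ : y² = x³ + 5x + 10 and y·(x − 5) = 16} = {(1, −4), (6, 16)}. -/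
/-!
Eliminating `y` from `y² = x³ + 5x + 10` and `y (x - 5) = c` with `c² = 256` gives
`(x - 5)² (x³ + 5x + 10) - 256 = (x - 1)⁴ (x - 6) = 0`, so `x ∈ {1, 6}` and then `y = c / (x - 5)`.
-/

section Fibre

variable {K : Type*} [Field K] {c x y : K}

theorem eq_one_or_eq_six_of_mem_fibre (hc : c ^ 2 = 256) (hE : y ^ 2 = x ^ 3 + 5 * x + 10)
    (hf : y * (x - 5) = c) : x = 1 ∨ x = 6 := by
  have hroots : (x - 1) ^ 4 * (x - 6) = 0 := by
    linear_combination (-(x - 5) ^ 2) * hE + (y * (x - 5) + c) * hf + hc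
  rcases mul_eq_zero.mp hroots with h | h
  · exact .inl (sub_eq_zero.mp (pow_eq_zero_iff four_ne_zero |>.mp h))
  · exact .inr (sub_eq_zero.mp h)

theorem mem_fibre_iff [NeZero (2 : K)] (hc : c ^ 2 = 256) :
    (y ^ 2 = x ^ 3 + 5 * x + 10 ∧ y * (x - 5) = c) ↔ (x = 1 ∧ y = -c / 4) ∨ (x = 6 ∧ y = c) := by
  have h4 : (4 : K) ≠ 0 := by
    simpa [show (4 : K) = 2 ^ 2 by norm_num] using NeZero.ne (2 : K)
  constructor
  · rintro ⟨hE, hf⟩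
    rcases eq_one_or_eq_six_of_mem_fibre hc hE hf with rfl | rfl
    · exact .inl ⟨rfl, by rw [eq_div_iff h4]; linear_combination -hf⟩
    · exact .inr ⟨rfl, by linear_combination hf⟩
  · rintro (⟨rfl, rfl⟩ | ⟨rfl, rfl⟩)
    · exact ⟨by field_simp; linear_combination hc, by field_simp; ring⟩
    · exact ⟨by linear_combination hc, by ring⟩

end Fibre

/-- The fibres of the map `(x, y) ↦ y·(x − 5)` on the complex points of
`E : y² = x³ + 5x + 10` over its finite critical values `−16` and `16` are
`{(1, 4), (6, −16)}` and `{(1, −4), (6, 16)}` respectively. -/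
theorem fibres_over_critical_values :
    {p : ℂ × ℂ | p.2 ^ 2 = p.1 ^ 3 + 5 * p.1 + 10 ∧ p.2 * (p.1 - 5) = -16} =
      {((1 : ℂ), (4 : ℂ)), ((6 : ℂ), (-16 : ℂ))} ∧
    {p : ℂ × ℂ | p.2 ^ 2 = p.1 ^ 3 + 5 * p.1 + 10 ∧ p.2 * (p.1 - 5) = 16} =
      {((1 : ℂ), (-4 : ℂ)), ((6 : ℂ), (16 : ℂ))} := by
  constructor <;> ext ⟨x, y⟩ <;>
    simp only [Set.mem_ofPred_eq, Set.mem_insert_iff, Set.mem_singleton_iff, Prod.mk.injEq] <;>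
    rw [mem_fibre_iff (by norm_num)] <;> norm_num
end

section
/- Let A = ℤ[X]/(X³ + 5X − 246, 32) and let m be the (maximal) ideal of A generated by the images of 2 and X. Then the localization of A at m is isomorphic as a ring to ℤ/32ℤ. -/
/-!
Modulo 32 the cubic factors as `(X - 6)(X² + 6X + 41)`, and the cofactor is `≡ 41 ≡ 1` modulo
`m`, so it becomes a unit in `A_m` and forces `X = 6` there. Accordingly, evaluation at `6`,
`A → ℤ/32ℤ`, is the localization at `m`: `m` is the preimage of the maximal ideal `(2)` of the local
ring `ℤ/32ℤ`, so the complement of `m` maps to units, and every element of the kernel, being a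
multiple of `X - 6`, is killed by the cofactor.
-/

open Polynomial

/-- The ring `A = ℤ[X]/(X³ + 5X − 246, 32)`. -/
noncomputable abbrev A : Type :=
  ℤ[X] ⧸ Ideal.span ({X ^ 3 + 5 * X - 246, 32} : Set ℤ[X])

/-- The ideal of `A` generated by the images of `2` and `X`. -/
noncomputable def m : Ideal A :=
  Ideal.span {(2 : A), Ideal.Quotient.mk _ X}

theorem ZMod.isUnit_of_castHom_ne_zero {p d : ℕ} [Fact p.Prime] (hd : 0 < d) {z : ZMod (p ^ d)}
    (hz : castHom (dvd_pow_self p hd.ne') (ZMod p) z ≠ 0) : IsUnit z := by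
  rw [← natCast_zmod_val z, isUnit_natCast_iff_not_dvd_pow Fact.out hd,
    ← natCast_eq_zero_iff]
  rwa [← natCast_zmod_val z, map_natCast] at hz

theorem IsLocalization.of_surjective_of_mul_ker_eq_zero {R S : Type*} [CommRing R] [CommRing S]
    [Algebra R S] {M : Submonoid R} (hsurj : Function.Surjective (algebraMap R S))
    (hunit : ∀ y : M, IsUnit (algebraMap R S y)) {s : R} (hs : s ∈ M)
    (hker : ∀ x, algebraMap R S x = 0 → s * x = 0) : IsLocalization M S where
  map_units := hunit
  surj z := by
    obtain ⟨x, rfl⟩ := hsurj z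
    exact ⟨(x, 1), by simp⟩
  exists_of_eq {x y} h :=
    ⟨⟨s, hs⟩, by simpa [mul_sub, sub_eq_zero] using hker (x - y) (by simp [h])⟩

local notation "ξ" => (Ideal.Quotient.mk _ X : A)

noncomputable def evalSix : A →+* ZMod 32 :=
  Ideal.Quotient.lift _ (eval₂RingHom (Int.castRingHom _) 6) fun _ hp ↦ RingHom.mem_ker.mp <|
    (Ideal.span_le (I := RingHom.ker _)).mpr (by rintro q (rfl | rfl) <;> simp; decide) hp

noncomputable abbrev evalSixModTwo : A →+* ZMod 2 :=
  (ZMod.castHom (by norm_num : 2 ∣ 32) (ZMod 2)).comp evalSix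

theorem evalSix_X : evalSix ξ = 6 := by
  rw [evalSix, Ideal.Quotient.lift_mk, coe_eval₂RingHom, eval₂_X]

theorem thirtyTwo_eq_zero : (32 : A) = 0 := by
  rw [← map_ofNat (Ideal.Quotient.mk _), Ideal.Quotient.eq_zero_iff_mem]
  exact Ideal.subset_span (by simp)

theorem cofactor_mul_X_sub_six : (ξ ^ 2 + 6 * ξ + 41) * (ξ - 6) = 0 := by
  have : (ξ ^ 3 + 5 * ξ - 246 : A) = 0 := by
    rw [← Ideal.Quotient.eq_zero_iff_mem.mpr (Ideal.subset_span (Set.mem_insert _ _))]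
    simp only [map_sub, map_add, map_mul, map_pow, map_ofNat]
  linear_combination this

theorem exists_eq_mul_X_sub_six_add_intCast (a : A) :
    ∃ (b : A) (n : ℤ), a = b * (ξ - 6) + n ∧ evalSix a = n := by
  obtain ⟨p, rfl⟩ := Ideal.Quotient.mk_surjective a
  obtain ⟨q, hq⟩ := X_sub_C_dvd_sub_C_eval (a := (6 : ℤ)) (p := p)
  have hp : Ideal.Quotient.mk _ p = Ideal.Quotient.mk _ q * (ξ - 6) + ((p.eval 6 : ℤ) : A) := by
    conv_lhs => rw [eq_add_of_sub_eq hq, eq_intCast C (p.eval 6)]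
    simp only [map_add, map_mul, map_sub, map_intCast, map_ofNat]
    ring
  refine ⟨_, _, hp, ?_⟩
  rw [hp]
  simp only [map_add, map_mul, map_sub, map_intCast, map_ofNat, evalSix_X]
  ring

theorem m_eq_ker : m = RingHom.ker evalSixModTwo := by
  apply le_antisymm
  · rw [m, Ideal.span_le]
    rintro q (rfl | rfl) <;>
      simp only [SetLike.mem_coe, RingHom.mem_ker, RingHom.comp_apply, map_ofNat, evalSix_X] <;>
      decide
  · intro a ha
    obtain ⟨b, n, rfl, hn⟩ := exists_eq_mul_X_sub_six_add_intCast a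
    rw [RingHom.mem_ker, RingHom.comp_apply, hn, map_intCast, ZMod.intCast_eq_zero_iff_even] at ha
    obtain ⟨k, rfl⟩ := ha
    have two_mem : (2 : A) ∈ m := Ideal.subset_span (Set.mem_insert _ _)
    have X_mem : ξ ∈ m := Ideal.subset_span (Set.mem_insert_of_mem _ rfl)
    rw [show ((k + k : ℤ) : A) = 2 * k by push_cast; ring, show (6 : A) = 2 * 3 by norm_num]
    exact m.add_mem (m.mul_mem_left _ (m.sub_mem X_mem (m.mul_mem_right _ two_mem)))
      (m.mul_mem_right _ two_mem)

theorem m_isMaximal : m.IsMaximal :=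
  m_eq_ker ▸ RingHom.ker_isMaximal_of_surjective _ (ZMod.ringHom_surjective _)

theorem cofactor_not_mem_m : ξ ^ 2 + 6 * ξ + 41 ∉ m := by
  rw [m_eq_ker, RingHom.mem_ker]
  simp only [RingHom.comp_apply, map_add, map_mul, map_pow, map_ofNat, evalSix_X]
  decide

theorem cofactor_mul_eq_zero_of_evalSix_eq_zero {a : A} (ha : evalSix a = 0) :
    (ξ ^ 2 + 6 * ξ + 41) * a = 0 := by
  obtain ⟨b, n, rfl, hn⟩ := exists_eq_mul_X_sub_six_add_intCast a
  rw [ha, eq_comm, ZMod.intCast_zmod_eq_zero_iff_dvd] at hn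
  obtain ⟨j, rfl⟩ := hn
  rw [Int.cast_mul, Nat.cast_ofNat, Int.cast_ofNat, thirtyTwo_eq_zero, zero_mul, add_zero,
    mul_left_comm, cofactor_mul_X_sub_six, mul_zero]

/-- The ideal `m = (2, X)` of `A = ℤ[X]/(X³ + 5X − 246, 32)` is maximal, and the
localization of `A` at `m` is isomorphic to `ℤ/32ℤ`. -/
theorem localization_at_m_iso_zmod32 :
    ∃ hm : m.IsMaximal, Nonempty (@Localization.AtPrime A _ m hm.isPrime ≃+* ZMod 32) := by
  refine ⟨m_isMaximal, ⟨?_⟩⟩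
  have := m_isMaximal.isPrime
  letI := evalSix.toAlgebra
  have : IsLocalization m.primeCompl (ZMod 32) :=
    IsLocalization.of_surjective_of_mul_ker_eq_zero (ZMod.ringHom_surjective evalSix)
      (fun y ↦ ZMod.isUnit_of_castHom_ne_zero (p := 2) (d := 5) (by norm_num)
        fun h ↦ y.2 (m_eq_ker.ge h))
      cofactor_not_mem_m fun _ ↦ cofactor_mul_eq_zero_of_evalSix_eq_zero
  exact (IsLocalization.algEquiv m.primeCompl (Localization.AtPrime m) (ZMod 32)).toRingEquiv
end
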